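/- arXiv:1304.7425 — 7 statements merged into one kernel-verified Lean document; each statement's English description precedes it below -/
import Mathlib

section
/- Let α ∈ (1,2). Then the Lubich coefficients satisfy: q_0^α = (3/2)^α > 0; q_1^α = −(3/2)^α·(4α/3) < 0; q_2^α = (3/2)^α·α(8α−5)/9 > 0; q_3^α = (3/2)^α·4α(α−1)(7−8α)/81 < 0; q_4^α = (3/2)^α·α(α−1)(64α²−176α+123)/486 > 0; and q_5^α = (3/2)^α·2α(α−1)(2−α)(64α²−208α+183)/3645 > 0. -/
open scoped BigOperators

/-- The coefficients `g_k^α = (-1)^k * binom(α, k)`, defined recursively. -/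
noncomputable def gL (α : ℝ) : ℕ → ℝ
  | 0 => 1
  | (k + 1) => (1 - (α + 1) / ((k : ℝ) + 1)) * gL α k

/-- The Lubich coefficients `q_k^α = (3/2)^α * Σ_{m=0}^{k} 3^{-m} g_m^α g_{k-m}^α`
for `k ≥ 0`, and `q_k^α = 0` for `k < 0`. -/
noncomputable def qL (α : ℝ) (k : ℤ) : ℝ :=
  if 0 ≤ k then
    (3 / 2 : ℝ) ^ α *
      ∑ m ∈ Finset.range (k.toNat + 1), (3 : ℝ) ^ (-(m : ℤ)) * gL α m * gL α (k.toNat - m)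
  else 0

/-! The closed forms are polynomial identities in `α`, obtained by expanding the first few
binomial coefficients `g_k^α` in the convolution. Under `1 < α < 2` the signs can then be read
off factor by factor; the two quadratic factors have no real roots:
`64α² - 176α + 123 = (8α - 11)² + 2` and `64α² - 208α + 183 = (8α - 13)² + 14`. -/

open Finset

namespace Lubich

variable (α : ℝ)

theorem gL_zero : gL α 0 = 1 := rfl

theorem gL_one : gL α 1 = -α := by simp [gL]

theorem gL_two : gL α 2 = α * (α - 1) / 2 := by simp [gL]; ring

theorem gL_three : gL α 3 = -(α * (α - 1) * (α - 2)) / 6 := by simp [gL]; ring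

theorem gL_four : gL α 4 = α * (α - 1) * (α - 2) * (α - 3) / 24 := by simp [gL]; ring

theorem gL_five : gL α 5 = -(α * (α - 1) * (α - 2) * (α - 3) * (α - 4)) / 120 := by
  simp [gL]; ring

theorem qL_natCast (k : ℕ) :
    qL α k = (3 / 2 : ℝ) ^ α *
      ∑ m ∈ range (k + 1), (3 : ℝ) ^ (-(m : ℤ)) * gL α m * gL α (k - m) := by
  simp [qL]

theorem qL_zero : qL α 0 = (3 / 2 : ℝ) ^ α := by
  rw [show (0 : ℤ) = ((0 : ℕ) : ℤ) from rfl, qL_natCast]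
  simp [gL_zero]

theorem qL_one : qL α 1 = -((3 / 2 : ℝ) ^ α * (4 * α / 3)) := by
  rw [show (1 : ℤ) = ((1 : ℕ) : ℤ) from rfl, qL_natCast]
  norm_num [sum_range_succ, gL_zero, gL_one]
  ring

theorem qL_two : qL α 2 = (3 / 2 : ℝ) ^ α * (α * (8 * α - 5) / 9) := by
  rw [show (2 : ℤ) = ((2 : ℕ) : ℤ) from rfl, qL_natCast]
  congr 1
  norm_num [sum_range_succ, gL_zero, gL_one, gL_two]
  ring

theorem qL_three : qL α 3 = (3 / 2 : ℝ) ^ α * (4 * α * (α - 1) * (7 - 8 * α) / 81) := by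
  rw [show (3 : ℤ) = ((3 : ℕ) : ℤ) from rfl, qL_natCast]
  congr 1
  norm_num [sum_range_succ, gL_zero, gL_one, gL_two, gL_three]
  ring

theorem qL_four :
    qL α 4 = (3 / 2 : ℝ) ^ α * (α * (α - 1) * (64 * α ^ 2 - 176 * α + 123) / 486) := by
  rw [show (4 : ℤ) = ((4 : ℕ) : ℤ) from rfl, qL_natCast]
  congr 1
  norm_num [sum_range_succ, gL_zero, gL_one, gL_two, gL_three, gL_four]
  ring

theorem qL_five : qL α 5 = (3 / 2 : ℝ) ^ α *
    (2 * α * (α - 1) * (2 - α) * (64 * α ^ 2 - 208 * α + 183) / 3645) := by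
  rw [show (5 : ℤ) = ((5 : ℕ) : ℤ) from rfl, qL_natCast]
  congr 1
  norm_num [sum_range_succ, gL_zero, gL_one, gL_two, gL_three, gL_four, gL_five]
  ring

end Lubich

open Lubich in
theorem stmt0 (α : ℝ) (h1 : 1 < α) (h2 : α < 2) :
    (qL α 0 = (3 / 2 : ℝ) ^ α ∧ 0 < qL α 0) ∧
    (qL α 1 = -((3 / 2 : ℝ) ^ α * (4 * α / 3)) ∧ qL α 1 < 0) ∧
    (qL α 2 = (3 / 2 : ℝ) ^ α * (α * (8 * α - 5) / 9) ∧ 0 < qL α 2) ∧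
    (qL α 3 = (3 / 2 : ℝ) ^ α * (4 * α * (α - 1) * (7 - 8 * α) / 81) ∧ qL α 3 < 0) ∧
    (qL α 4 = (3 / 2 : ℝ) ^ α * (α * (α - 1) * (64 * α ^ 2 - 176 * α + 123) / 486) ∧
      0 < qL α 4) ∧
    (qL α 5 = (3 / 2 : ℝ) ^ α *
        (2 * α * (α - 1) * (2 - α) * (64 * α ^ 2 - 208 * α + 183) / 3645) ∧
      0 < qL α 5) := by
  have hα : 0 < α := by linarith
  have hα1 : 0 < α - 1 := by linarith
  have h2α : 0 < 2 - α := by linarith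
  have h85 : 0 < 8 * α - 5 := by linarith
  have h87 : 0 < 8 * α - 7 := by linarith
  have hquad4 : 0 < 64 * α ^ 2 - 176 * α + 123 := by nlinarith [sq_nonneg (8 * α - 11)]
  have hquad5 : 0 < 64 * α ^ 2 - 208 * α + 183 := by nlinarith [sq_nonneg (8 * α - 13)]
  rw [qL_zero, qL_one, qL_two, qL_three, qL_four, qL_five]
  refine ⟨⟨rfl, by positivity⟩, ⟨rfl, neg_neg_of_pos (by positivity)⟩,
    ⟨rfl, by positivity⟩, ⟨rfl, ?_⟩, ⟨rfl, by positivity⟩,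
    ⟨rfl, by positivity⟩⟩
  have h3 : 4 * α * (α - 1) * (7 - 8 * α) / 81 < 0 := by
    rw [show 7 - 8 * α = -(8 * α - 7) by ring, mul_neg, neg_div]
    exact neg_neg_of_pos (by positivity)
  exact mul_neg_of_pos_of_neg (by positivity) h3
end

section
/- Let α ∈ (1,2). Then the series Σ_{k=0}^{∞} q_k^α converges and its sum equals 0. -/
open scoped BigOperators

/-!
`g_k^α` are the Taylor coefficients of `(1 - x)^α`, and `q_k^α` those of
`(3/2)^α (1 - x/3)^α (1 - x)^α`. By Pascal's rule the partial sums `∑_{k ≤ n} g_k^α` equal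
`g_n^{α-1} = O(1/n)`, and `g_k^α ≥ 0` for `k ≥ 2`, so `∑ g_k^α` converges absolutely to `0`.
Mertens' theorem on Cauchy products then gives
`∑ q_k^α = (3/2)^α (∑ 3^{-m} g_m^α) (∑ g_k^α) = 0`.
-/

open Filter Topology Finset

lemma gL_succ (α : ℝ) (k : ℕ) : gL α (k + 1) = (1 - (α + 1) / ((k : ℝ) + 1)) * gL α k := rfl

lemma succ_mul_gL_succ (α : ℝ) (k : ℕ) :
    ((k : ℝ) + 1) * gL α (k + 1) = ((k : ℝ) - α) * gL α k := by
  rw [gL_succ]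
  field_simp
  ring

lemma succ_mul_gL_succ_eq_neg_mul_gL_sub_one (α : ℝ) (n : ℕ) :
    ((n : ℝ) + 1) * gL α (n + 1) = -α * gL (α - 1) n := by
  induction n with
  | zero => simp [gL]
  | succ n ih =>
    have hn : ((n : ℝ) + 1) ≠ 0 := by positivity
    have step := succ_mul_gL_succ α (n + 1)
    have step' := succ_mul_gL_succ (α - 1) n
    push_cast at step ⊢
    refine mul_left_cancel₀ hn ?_
    linear_combination ((n : ℝ) + 1) * step + ((n : ℝ) + 1 - α) * ih + α * step'

/-- Pascal's rule `binom(α, n+1) = binom(α-1, n+1) + binom(α-1, n)` in signed form. -/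
lemma gL_succ_eq_sub (α : ℝ) (n : ℕ) : gL α (n + 1) = gL (α - 1) (n + 1) - gL (α - 1) n := by
  have hn : ((n : ℝ) + 1) ≠ 0 := by positivity
  refine mul_left_cancel₀ hn ?_
  linear_combination succ_mul_gL_succ_eq_neg_mul_gL_sub_one α n - succ_mul_gL_succ (α - 1) n

lemma sum_range_succ_gL (α : ℝ) (n : ℕ) : ∑ k ∈ range (n + 1), gL α k = gL (α - 1) n := by
  induction n with
  | zero => simp [gL]
  | succ n ih => rw [sum_range_succ, ih, gL_succ_eq_sub]; ring

lemma abs_gL_succ_le {β : ℝ} (hβ₀ : 0 ≤ β) (hβ₁ : β ≤ 1) (n : ℕ) :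
    |gL β (n + 1)| ≤ 1 / ((n : ℝ) + 1) := by
  induction n with
  | zero => simp [gL, abs_of_nonneg hβ₀, hβ₁]
  | succ n ih =>
    have hfactor : |1 - (β + 1) / ((n : ℝ) + 1 + 1)| ≤ 1 - 1 / ((n : ℝ) + 1 + 1) := by
      have hle : (β + 1) / ((n : ℝ) + 1 + 1) ≤ 1 := by rw [div_le_one (by positivity)]; linarith
      have hge : 1 / ((n : ℝ) + 1 + 1) ≤ (β + 1) / ((n : ℝ) + 1 + 1) := by gcongr; linarith
      rw [abs_of_nonneg (by linarith)]
      linarith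
    calc |gL β (n + 1 + 1)|
        = |1 - (β + 1) / ((n : ℝ) + 1 + 1)| * |gL β (n + 1)| := by
          rw [gL_succ, abs_mul]; push_cast; rfl
      _ ≤ (1 - 1 / ((n : ℝ) + 1 + 1)) * (1 / ((n : ℝ) + 1)) :=
          mul_le_mul hfactor ih (abs_nonneg _)
            (by rw [sub_nonneg, div_le_one (by positivity)]; linarith)
      _ = 1 / ((↑(n + 1) : ℝ) + 1) := by push_cast; field_simp; ring

lemma tendsto_gL_atTop_nhds_zero {β : ℝ} (hβ₀ : 0 ≤ β) (hβ₁ : β ≤ 1) :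
    Tendsto (gL β) atTop (𝓝 0) := by
  rw [← tendsto_add_atTop_iff_nat 1]
  exact squeeze_zero_norm (fun n => abs_gL_succ_le hβ₀ hβ₁ n)
    tendsto_one_div_add_atTop_nhds_zero_nat

lemma gL_add_two_nonneg {α : ℝ} (h₁ : 1 ≤ α) (h₂ : α ≤ 2) (n : ℕ) : 0 ≤ gL α (n + 2) := by
  induction n with
  | zero =>
    have hg2 : gL α 2 = α * (α - 1) / 2 := by
      simp only [gL, Nat.cast_one, Nat.cast_zero, zero_add, div_one]
      ring
    rw [hg2]
    have := mul_nonneg (by linarith : (0 : ℝ) ≤ α) (sub_nonneg.2 h₁)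
    positivity
  | succ n ih =>
    rw [show n + 1 + 2 = (n + 2) + 1 from rfl, gL_succ]
    refine mul_nonneg ?_ ih
    rw [sub_nonneg, div_le_one (by positivity)]
    push_cast
    linarith [(n.cast_nonneg : (0 : ℝ) ≤ n)]

lemma hasSum_gL {α : ℝ} (h₁ : 1 ≤ α) (h₂ : α ≤ 2) : HasSum (gL α) 0 := by
  have hpartial : Tendsto (fun n => ∑ k ∈ range n, gL α k) atTop (𝓝 0) := by
    rw [← tendsto_add_atTop_iff_nat 1]
    simp_rw [sum_range_succ_gL]
    exact tendsto_gL_atTop_nhds_zero (by linarith) (by linarith)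
  rw [← hasSum_nat_add_iff' 2, hasSum_iff_tendsto_nat_of_nonneg (gL_add_two_nonneg h₁ h₂)]
  rw [← tendsto_add_atTop_iff_nat 2] at hpartial
  refine (hpartial.sub_const (∑ k ∈ range 2, gL α k)).congr fun n => ?_
  rw [add_comm n 2, sum_range_add]
  simp_rw [add_comm 2]
  ring

lemma summable_norm_gL {α : ℝ} (h₁ : 1 ≤ α) (h₂ : α ≤ 2) : Summable fun k => ‖gL α k‖ := by
  rw [← summable_nat_add_iff 2]
  simp_rw [Real.norm_of_nonneg (gL_add_two_nonneg h₁ h₂ _)]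
  exact (summable_nat_add_iff 2).2 (hasSum_gL h₁ h₂).summable

lemma qL_natCast (α : ℝ) (n : ℕ) :
    qL α n = (3 / 2 : ℝ) ^ α *
      ∑ m ∈ range (n + 1), (3 : ℝ) ^ (-(m : ℤ)) * gL α m * gL α (n - m) := by
  rw [qL, if_pos (Int.natCast_nonneg n), Int.toNat_natCast]

/-- The series `Σ_{k=0}^∞ q_k^α` converges (as a limit of partial sums) with sum `0`. -/
theorem stmt1 (α : ℝ) (h1 : 1 < α) (h2 : α < 2) :
    Filter.Tendsto (fun n : ℕ => ∑ k ∈ Finset.range n, qL α (k : ℤ))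
      Filter.atTop (nhds 0) := by
  set f : ℕ → ℝ := fun m => (3 : ℝ) ^ (-(m : ℤ)) * gL α m
  have hf : Summable fun m => ‖f m‖ := by
    refine (summable_norm_gL h1.le h2.le).of_nonneg_of_le (fun _ => norm_nonneg _) fun m => ?_
    rw [norm_mul]
    refine mul_le_of_le_one_left (norm_nonneg _) ?_
    rw [Real.norm_of_nonneg (by positivity), zpow_neg]
    exact inv_le_one_of_one_le₀ (one_le_zpow₀ (by norm_num) (by positivity))
  have hcauchy := hasSum_sum_range_mul_of_summable_norm hf (summable_norm_gL h1.le h2.le)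
  rw [(hasSum_gL h1.le h2.le).tsum_eq, mul_zero] at hcauchy
  have hq : HasSum (fun n : ℕ => qL α n) 0 := by
    simp_rw [qL_natCast]
    simpa only [mul_zero] using hcauchy.mul_left ((3 / 2 : ℝ) ^ α)
  exact hq.tendsto_sum_nat
end

section
/- Let α ∈ (1,2) and p ∈ ℤ. Then, as z → 0 in ℂ∖{0}, e^{pz}·((1−e^{−z})/z)^α·(1 + (1−e^{−z})/2)^α − [1 + p·z + ((3p²−2α)/6)·z² + ((2p³ + α(3−4p))/12)·z³] = O(z⁴); that is, there exist constants C > 0 and δ > 0 such that for all z ∈ ℂ with 0 < |z| < δ the modulus of the left-hand side is at most C·|z|⁴. -/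
/-!
Near `0` the bases `u = (1 - e^{-z})/z` and `v = 1 + (1 - e^{-z})/2` are close to `1`, so the
symbol equals `exp w` with `w = p z + α log u + α log v`. Expanding `e^{-z}` gives cubic Taylor
polynomials of `u - 1` and `v - 1`; substituting them into the cubic Taylor polynomial of
`log (1 + s)` yields `w = p z - α z²/3 + α z³/4 + O(z⁴)`, and substituting this into the cubic
Taylor polynomial of `exp` gives the expansion. Each substitution costs only `O(z⁴)`: the outer
function has a strict derivative, hence is locally Lipschitz, and the inner polynomial is `O(z)`.
-/

open Complex Filter Asymptotics Topology

section Substitution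

variable {𝕜 F : Type*} [NontriviallyNormedField 𝕜] [NormedAddCommGroup F] [NormedSpace 𝕜 F]

lemma isBigO_pow_mul {Q : 𝕜 → 𝕜} (hQ : Continuous Q) (n : ℕ) :
    (fun z => z ^ n * Q z) =O[𝓝 0] (· ^ n) := by
  simpa using (isBigO_refl (· ^ n) (𝓝 (0 : 𝕜))).mul ((hQ.tendsto 0).isBigO_one 𝕜)

lemma HasStrictDerivAt.isBigO_comp_sub_comp {ι : Type*} {g : 𝕜 → F} {g' : F} {a : 𝕜}
    (hg : HasStrictDerivAt g g' a) {L : Filter ι} {t s : ι → 𝕜}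
    (ht : Tendsto t L (𝓝 a)) (hs : Tendsto s L (𝓝 a)) :
    (fun x => g (t x) - g (s x)) =O[L] fun x => t x - s x :=
  hg.hasStrictFDerivAt.isBigO_sub.comp_tendsto (ht.prodMk_nhds hs)

lemma isBigO_comp_sub_comp_of_taylor {g q : 𝕜 → F} {g' : F} {a : 𝕜} {n : ℕ} (hn : n ≠ 0)
    (hg : HasStrictDerivAt g g' a) (hq : (fun s => g (a + s) - q s) =O[𝓝 0] (· ^ n))
    {t T : 𝕜 → 𝕜} (hT : DifferentiableAt 𝕜 T 0) (hT0 : T 0 = 0)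
    (htT : (fun z => t z - (a + T z)) =O[𝓝[≠] 0] (· ^ n)) :
    (fun z => g (t z) - q (T z)) =O[𝓝[≠] 0] (· ^ n) := by
  have hTO : T =O[𝓝 0] fun z => z := by simpa [hT0] using hT.hasDerivAt.isBigO_sub
  have hTlim : Tendsto T (𝓝 0) (𝓝 0) := by simpa [hT0] using hT.continuousAt.tendsto
  have haT : Tendsto (fun z => a + T z) (𝓝[≠] 0) (𝓝 a) := by
    simpa using (tendsto_const_nhds.add hTlim).mono_left nhdsWithin_le_nhds
  have hpow : Tendsto (· ^ n) (𝓝[≠] (0 : 𝕜)) (𝓝 0) := by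
    simpa [zero_pow hn] using ((continuous_pow (M := 𝕜) n).tendsto 0).mono_left nhdsWithin_le_nhds
  have ht : Tendsto t (𝓝[≠] 0) (𝓝 a) := by
    simpa using (htT.trans_tendsto hpow).add haT
  have htaylor : (fun z => g (a + T z) - q (T z)) =O[𝓝[≠] 0] (· ^ n) :=
    ((hq.comp_tendsto hTlim).trans (hTO.pow n)).mono nhdsWithin_le_nhds
  simpa using ((hg.isBigO_comp_sub_comp ht haT).trans htT).add htaylor

end Substitution

lemma Asymptotics.IsBigO.exists_pos_bound_nhdsNE {𝕜 E : Type*} [NormedField 𝕜]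
    [SeminormedAddCommGroup E] {f : 𝕜 → E} {n : ℕ} (h : f =O[𝓝[≠] 0] (· ^ n)) :
    ∃ C > (0 : ℝ), ∃ δ > (0 : ℝ), ∀ z : 𝕜, 0 < ‖z‖ → ‖z‖ < δ → ‖f z‖ ≤ C * ‖z‖ ^ n := by
  obtain ⟨C, hC, hCf⟩ := h.exists_pos
  obtain ⟨δ, hδ, hball⟩ := Metric.nhdsWithin_basis_ball.eventually_iff.mp hCf.bound
  refine ⟨C, hC, δ, hδ, fun z hz0 hzδ => ?_⟩
  simpa using hball ⟨mem_ball_zero_iff.2 hzδ, norm_pos_iff.1 hz0⟩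

lemma log_one_add_sub_taylor_isBigO :
    (fun s : ℂ => log (1 + s) - (s - s ^ 2 / 2 + s ^ 3 / 3)) =O[𝓝 0] (· ^ 4) :=
  (log_sub_logTaylor_isBigO 3).congr_left fun s => by
    simp [logTaylor_succ, logTaylor_zero]
    ring

lemma exp_sub_taylor_isBigO :
    (fun s : ℂ => exp s - (1 + s + s ^ 2 / 2 + s ^ 3 / 6)) =O[𝓝 0] (· ^ 4) :=
  (exp_sub_sum_range_isBigO_pow 4).congr_left fun s => by
    simp [Finset.sum_range_succ, Nat.factorial]

lemma exp_neg_sub_sum_range_isBigO_pow (n : ℕ) :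
    (fun z : ℂ => exp (-z) - ∑ i ∈ Finset.range n, (-z) ^ i / i.factorial) =O[𝓝 0] (· ^ n) := by
  have hneg : Tendsto (fun z : ℂ => -z) (𝓝 0) (𝓝 0) := by
    simpa using (tendsto_id (x := 𝓝 (0 : ℂ))).neg
  exact ((exp_sub_sum_range_isBigO_pow n).comp_tendsto hneg).trans
    (isBigO_of_le _ fun z => by simp [norm_pow, norm_neg])

lemma one_sub_exp_neg_div_sub_isBigO :
    (fun z : ℂ => (1 - exp (-z)) / z - (1 + (-z / 2 + z ^ 2 / 6 - z ^ 3 / 24)))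
      =O[𝓝[≠] 0] (· ^ 4) := by
  have hdiv := ((exp_neg_sub_sum_range_isBigO_pow 5).neg_left.mul
    (isBigO_refl (fun z : ℂ => z⁻¹) (𝓝 0))).trans
    (isBigO_of_le (g := fun z : ℂ => z ^ 4) _ fun z => by
      rcases eq_or_ne z 0 with rfl | hz
      · simp
      · rw [pow_succ, mul_inv_cancel_right₀ hz])
  refine (hdiv.mono nhdsWithin_le_nhds).congr' ?_ EventuallyEq.rfl
  filter_upwards [self_mem_nhdsWithin] with z (hz : z ≠ 0)
  simp [Finset.sum_range_succ, Nat.factorial]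
  field_simp
  ring

lemma one_add_one_sub_exp_neg_div_two_sub_isBigO :
    (fun z : ℂ => (1 + (1 - exp (-z)) / 2) - (1 + (z / 2 - z ^ 2 / 4 + z ^ 3 / 12)))
      =O[𝓝[≠] 0] (· ^ 4) := by
  refine (((exp_neg_sub_sum_range_isBigO_pow 4).const_mul_left (-1 / 2 : ℂ)).mono
    nhdsWithin_le_nhds).congr_left fun z => ?_
  simp [Finset.sum_range_succ, Nat.factorial]
  ring

lemma tendsto_one_sub_exp_neg_div :
    Tendsto (fun z : ℂ => (1 - exp (-z)) / z) (𝓝[≠] 0) (𝓝 1) := by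
  have h : HasDerivAt (fun z : ℂ => 1 - exp (-z)) 1 0 := by
    simpa using ((hasDerivAt_exp (-0)).comp 0 (hasDerivAt_neg 0)).const_sub 1
  simpa [slope_fun_def_field] using h.tendsto_slope

lemma log_one_sub_exp_neg_div_sub_isBigO :
    (fun z : ℂ => log ((1 - exp (-z)) / z) - (-z / 2 + z ^ 2 / 24)) =O[𝓝[≠] 0] (· ^ 4) := by
  have hlog := isBigO_comp_sub_comp_of_taylor four_ne_zero
    (by simpa using hasStrictDerivAt_log one_mem_slitPlane) log_one_add_sub_taylor_isBigO
    (by fun_prop) (by norm_num) one_sub_exp_neg_div_sub_isBigO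
  have hrem := isBigO_pow_mul (Q := fun z : ℂ => 1 / 144 - 5 / 288 * z + 79 / 10368 * z ^ 2
    - 7 / 3456 * z ^ 3 + 1 / 3456 * z ^ 4 - 1 / 41472 * z ^ 5) (by fun_prop) 4
  exact (hlog.add (hrem.mono nhdsWithin_le_nhds)).congr_left fun z => by ring

lemma log_one_add_one_sub_exp_neg_div_two_sub_isBigO :
    (fun z : ℂ => log (1 + (1 - exp (-z)) / 2) - (z / 2 - 3 * z ^ 2 / 8 + z ^ 3 / 4))
      =O[𝓝[≠] 0] (· ^ 4) := by
  have hlog := isBigO_comp_sub_comp_of_taylor four_ne_zero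
    (by simpa using hasStrictDerivAt_log one_mem_slitPlane) log_one_add_sub_taylor_isBigO
    (by fun_prop) (by norm_num) one_add_one_sub_exp_neg_div_two_sub_isBigO
  have hrem := isBigO_pow_mul (Q := fun z : ℂ => -13 / 96 + 7 / 96 * z - 17 / 576 * z ^ 2
    + 5 / 576 * z ^ 3 - 1 / 576 * z ^ 4 + 1 / 5184 * z ^ 5) (by fun_prop) 4
  exact (hlog.add (hrem.mono nhdsWithin_le_nhds)).congr_left fun z => by ring

lemma symbol_eq_exp (α p : ℂ) : ∀ᶠ z in 𝓝[≠] 0,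
    exp (p * z) * ((1 - exp (-z)) / z) ^ α * (1 + (1 - exp (-z)) / 2) ^ α =
      exp (p * z + α * log ((1 - exp (-z)) / z) + α * log (1 + (1 - exp (-z)) / 2)) := by
  have hv : Tendsto (fun z : ℂ => 1 + (1 - exp (-z)) / 2) (𝓝 0) (𝓝 1) := by
    simpa using (by fun_prop : Continuous fun z : ℂ => 1 + (1 - exp (-z)) / 2).tendsto 0
  filter_upwards [tendsto_one_sub_exp_neg_div.eventually_ne one_ne_zero,
    (hv.eventually_ne one_ne_zero).filter_mono nhdsWithin_le_nhds] with z hu hv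
  rw [cpow_def_of_ne_zero hu, cpow_def_of_ne_zero hv, ← exp_add, ← exp_add]
  ring_nf

lemma symbol_sub_taylor_isBigO (α p : ℂ) :
    (fun z : ℂ => exp (p * z) * ((1 - exp (-z)) / z) ^ α * (1 + (1 - exp (-z)) / 2) ^ α -
      (1 + p * z + ((3 * p ^ 2 - 2 * α) / 6) * z ^ 2 +
        ((2 * p ^ 3 + α * (3 - 4 * p)) / 12) * z ^ 3)) =O[𝓝[≠] 0] (· ^ 4) := by
  have hw := (log_one_sub_exp_neg_div_sub_isBigO.const_mul_left α).add
    (log_one_add_one_sub_exp_neg_div_two_sub_isBigO.const_mul_left α)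
  have hexp := isBigO_comp_sub_comp_of_taylor four_ne_zero (hasStrictDerivAt_exp 0)
    (by simpa using exp_sub_taylor_isBigO) (T := fun z => p * z - α * z ^ 2 / 3 + α * z ^ 3 / 4)
    (by fun_prop) (by simp) (t := fun z => p * z + α * log ((1 - exp (-z)) / z) +
      α * log (1 + (1 - exp (-z)) / 2)) (hw.congr_left fun z => by ring)
  have hrem := isBigO_pow_mul (Q := fun z => (α * p / 4 + α ^ 2 / 18 - α * p ^ 2 / 6)
    + (α * p ^ 2 / 8 - α ^ 2 / 12 + α ^ 2 * p / 18) * z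
    + (α ^ 2 / 32 - α ^ 2 * p / 12 - α ^ 3 / 162) * z ^ 2
    + (α ^ 2 * p / 32 + α ^ 3 / 72) * z ^ 3 - α ^ 3 / 96 * z ^ 4 + α ^ 3 / 384 * z ^ 5)
    (by fun_prop) 4
  refine (hexp.add (hrem.mono nhdsWithin_le_nhds)).congr' ?_ EventuallyEq.rfl
  filter_upwards [symbol_eq_exp α p] with z hz
  rw [hz]
  ring

theorem stmt3_general (α : ℝ) (p : ℤ) :
    ∃ C > (0 : ℝ), ∃ δ > (0 : ℝ), ∀ z : ℂ, 0 < ‖z‖ → ‖z‖ < δ →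
      ‖(Complex.exp ((p : ℂ) * z) * ((1 - Complex.exp (-z)) / z) ^ (α : ℂ) *
            (1 + (1 - Complex.exp (-z)) / 2) ^ (α : ℂ) -
          (1 + (p : ℂ) * z + ((3 * (p : ℂ) ^ 2 - 2 * (α : ℂ)) / 6) * z ^ 2 +
            ((2 * (p : ℂ) ^ 3 + (α : ℂ) * (3 - 4 * (p : ℂ))) / 12) * z ^ 3))‖ ≤
      C * ‖z‖ ^ 4 :=
  (symbol_sub_taylor_isBigO α p).exists_pos_bound_nhdsNE

/-- Taylor expansion of the symbol of the shifted Lubich operator: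
`e^{pz} ((1-e^{-z})/z)^α (1 + (1-e^{-z})/2)^α
  = 1 + p z + ((3p²-2α)/6) z² + ((2p³ + α(3-4p))/12) z³ + O(z⁴)` as `z → 0`. -/
theorem stmt3 (α : ℝ) (h1 : 1 < α) (h2 : α < 2) (p : ℤ) :
    ∃ C > (0 : ℝ), ∃ δ > (0 : ℝ), ∀ z : ℂ, 0 < ‖z‖ → ‖z‖ < δ →
      ‖(Complex.exp ((p : ℂ) * z) * ((1 - Complex.exp (-z)) / z) ^ (α : ℂ) *
            (1 + (1 - Complex.exp (-z)) / 2) ^ (α : ℂ) -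
          (1 + (p : ℂ) * z + ((3 * (p : ℂ) ^ 2 - 2 * (α : ℂ)) / 6) * z ^ 2 +
            ((2 * (p : ℂ) ^ 3 + (α : ℂ) * (3 - 4 * (p : ℂ))) / 12) * z ^ 3))‖ ≤
      C * ‖z‖ ^ 4 :=
  stmt3_general α p
end

section
/- Let α ∈ (1,2), let q be an integer with |q| ≥ 2, and let x ∈ [0,π]. Define θ(x) = 2·arctan( 2·sin(x/2) / (cos(x/2) + √(1 + 3·sin²(x/2))) ). Then (1/(q−1)) · (2·sin(x/2))^α · (1 + 3·sin²(x/2))^{α/2} · [ q·cos(α·(x − π/2 − θ(x)) − x) − cos(α·(x − π/2 − θ(x)) − q·x) ] ≤ 0. -/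
/-!
Write `s = sin (x / 2)` and `c = cos (x / 2)`. By the half-angle formula for `arctan`, `θ(x)` is
the argument of `c + 2 s i`, so `sin θ = 2 s / √(1 + 3 s²)`, `cos θ = c / √(1 + 3 s²)`, and
`x - π/2 ≤ θ ≤ x/2 + π/6`. With `δ = θ + (α - 1)(θ + π/2 - x)` the bracket equals
`sin (δ + (q - 1) x) - q sin δ`, and `θ ≤ δ ≤ 5π/6`, whence `2 s cos δ ≤ c sin δ`.

For `q ≥ 2` this and `|sin (n x)| ≤ n sin x` give `sin (δ + (q - 1) x) ≤ q sin δ`. For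
`q = 1 - M ≤ -2` one needs `sin (M x - δ) ≤ (M - 1) sin δ`. This is trivial unless
`(M - 1) sin δ < 1`, which forces `x² M (M - 2) < 1`; it then reduces to
`c sin (M x) ≤ 2 s (M - 1 + cos (M x))`, an identity in `s, c` for `M = 3` and a comparison of
Taylor polynomials for `M ≥ 4`.
-/

open Real Set

lemma nonneg_of_hasDerivAt_of_nonneg {f f' : ℝ → ℝ} (hf : ∀ t, HasDerivAt f (f' t) t)
    (hf₀ : f 0 = 0) (hf' : ∀ t, 0 < t → 0 ≤ f' t) {t : ℝ} (ht : 0 ≤ t) : 0 ≤ f t := by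
  have hmono : MonotoneOn f (Ici 0) :=
    monotoneOn_of_hasDerivWithinAt_nonneg (convex_Ici 0)
      (fun u _ => (hf u).continuousAt.continuousWithinAt)
      (fun u _ => (hf u).hasDerivWithinAt)
      (fun u hu => hf' u (by simpa using hu))
  simpa [hf₀] using hmono self_mem_Ici ht ht

lemma cos_le_one_sub_sq_div_two_add_quartic {t : ℝ} (ht : 0 ≤ t) :
    cos t ≤ 1 - t ^ 2 / 2 + t ^ 4 / 24 := by
  have h := nonneg_of_hasDerivAt_of_nonneg (f := fun u => 1 - u ^ 2 / 2 + u ^ 4 / 24 - cos u)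
    (fun u => ((((hasDerivAt_const u 1).sub ((hasDerivAt_pow 2 u).div_const 2)).add
      ((hasDerivAt_pow 4 u).div_const 24)).sub (hasDerivAt_cos u)).congr_deriv
        (show _ = -u + u ^ 3 / 6 + sin u by push_cast; ring))
    (by simp) (fun u hu => by linarith [sin_ge_sub_cube hu.le]) ht
  linarith

lemma sin_le_sub_cube_add_quintic {t : ℝ} (ht : 0 ≤ t) :
    sin t ≤ t - t ^ 3 / 6 + t ^ 5 / 120 := by
  have h := nonneg_of_hasDerivAt_of_nonneg (f := fun u => u - u ^ 3 / 6 + u ^ 5 / 120 - sin u)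
    (fun u => ((((hasDerivAt_id u).sub ((hasDerivAt_pow 3 u).div_const 6)).add
      ((hasDerivAt_pow 5 u).div_const 120)).sub (hasDerivAt_sin u)).congr_deriv
        (show _ = 1 - u ^ 2 / 2 + u ^ 4 / 24 - cos u by push_cast; ring))
    (by simp) (fun u hu => by linarith [cos_le_one_sub_sq_div_two_add_quartic hu.le]) ht
  linarith

lemma mul_cos_le_sin {t : ℝ} (ht₀ : 0 ≤ t) (ht : t ≤ π / 2) : t * cos t ≤ sin t := by
  obtain rfl | ht := ht.eq_or_lt
  · simp
  have hcos : 0 < cos t := cos_pos_of_mem_Ioo ⟨by linarith [pi_pos], ht⟩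
  have := le_tan ht₀ ht
  rwa [tan_eq_sin_div_cos, le_div_iff₀ hcos] at this

lemma abs_sin_nat_mul_le (n : ℕ) (x : ℝ) : |sin (n * x)| ≤ n * |sin x| := by
  induction n with
  | zero => simp
  | succ n ih =>
    rw [Nat.cast_succ, add_mul, one_mul, sin_add]
    calc |sin (n * x) * cos x + cos (n * x) * sin x|
        ≤ |sin (n * x)| * |cos x| + |cos (n * x)| * |sin x| := by
          rw [← abs_mul, ← abs_mul]; exact abs_add_le _ _
      _ ≤ |sin (n * x)| * 1 + 1 * |sin x| := by
          gcongr <;> exact abs_cos_le_one _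
      _ ≤ (n + 1) * |sin x| := by linarith

lemma sin_two_mul_arctan (w : ℝ) : sin (2 * arctan w) = 2 * w / (1 + w ^ 2) := by
  have h : √(1 + w ^ 2) ^ 2 = 1 + w ^ 2 := sq_sqrt (by positivity)
  rw [sin_two_mul, sin_arctan, cos_arctan]
  field_simp
  rw [h]

lemma cos_two_mul_arctan (w : ℝ) : cos (2 * arctan w) = (1 - w ^ 2) / (1 + w ^ 2) := by
  rw [cos_two_mul, cos_arctan, div_pow, one_pow, sq_sqrt (by positivity)]
  field_simp
  ring

section HalfAngle

variable {y z : ℝ}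

lemma sqrt_sq_add_sq_pos (h : 0 < z + √(y ^ 2 + z ^ 2)) : 0 < √(y ^ 2 + z ^ 2) := by
  have : z ≤ √(y ^ 2 + z ^ 2) := (le_abs_self z).trans (abs_le_sqrt (by nlinarith))
  linarith

lemma sin_two_mul_arctan_div_add_sqrt (h : 0 < z + √(y ^ 2 + z ^ 2)) :
    sin (2 * arctan (y / (z + √(y ^ 2 + z ^ 2)))) = y / √(y ^ 2 + z ^ 2) := by
  have hρ := sqrt_sq_add_sq_pos h
  have hρ2 : √(y ^ 2 + z ^ 2) ^ 2 = y ^ 2 + z ^ 2 := sq_sqrt (by positivity)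
  rw [sin_two_mul_arctan]
  generalize √(y ^ 2 + z ^ 2) = ρ at *
  field_simp
  linear_combination y * hρ2

lemma cos_two_mul_arctan_div_add_sqrt (h : 0 < z + √(y ^ 2 + z ^ 2)) :
    cos (2 * arctan (y / (z + √(y ^ 2 + z ^ 2)))) = z / √(y ^ 2 + z ^ 2) := by
  have hρ := sqrt_sq_add_sq_pos h
  have hρ2 : √(y ^ 2 + z ^ 2) ^ 2 = y ^ 2 + z ^ 2 := sq_sqrt (by positivity)
  rw [cos_two_mul_arctan]
  generalize √(y ^ 2 + z ^ 2) = ρ at *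
  field_simp
  linear_combination (z + ρ) * hρ2

end HalfAngle

lemma sin_eq_two_mul_sin_half_mul_cos_half (x : ℝ) : sin x = 2 * sin (x / 2) * cos (x / 2) := by
  rw [← sin_two_mul]; ring_nf

noncomputable def theta (x : ℝ) : ℝ :=
  2 * arctan (2 * sin (x / 2) / (cos (x / 2) + √(1 + 3 * sin (x / 2) ^ 2)))

section Theta

variable {x : ℝ}

lemma one_add_three_mul_sin_sq (t : ℝ) : 1 + 3 * sin t ^ 2 = (2 * sin t) ^ 2 + cos t ^ 2 := by
  linear_combination -sin_sq_add_cos_sq t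

lemma one_le_sqrt_one_add_three_mul_sin_sq (t : ℝ) : 1 ≤ √(1 + 3 * sin t ^ 2) :=
  one_le_sqrt.mpr (by nlinarith [sq_nonneg (sin t)])

lemma sin_theta (hc : 0 ≤ cos (x / 2)) :
    sin (theta x) = 2 * sin (x / 2) / √(1 + 3 * sin (x / 2) ^ 2) := by
  have h : 0 < cos (x / 2) + √(1 + 3 * sin (x / 2) ^ 2) := by
    linarith [one_le_sqrt_one_add_three_mul_sin_sq (x / 2)]
  rw [one_add_three_mul_sin_sq] at h ⊢
  rw [theta, one_add_three_mul_sin_sq]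
  exact sin_two_mul_arctan_div_add_sqrt h

lemma cos_theta (hc : 0 ≤ cos (x / 2)) :
    cos (theta x) = cos (x / 2) / √(1 + 3 * sin (x / 2) ^ 2) := by
  have h : 0 < cos (x / 2) + √(1 + 3 * sin (x / 2) ^ 2) := by
    linarith [one_le_sqrt_one_add_three_mul_sin_sq (x / 2)]
  rw [one_add_three_mul_sin_sq] at h ⊢
  rw [theta, one_add_three_mul_sin_sq]
  exact cos_two_mul_arctan_div_add_sqrt h

lemma sin_half_nonneg (hx : x ∈ Icc 0 π) : 0 ≤ sin (x / 2) :=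
  sin_nonneg_of_nonneg_of_le_pi (by linarith [hx.1]) (by linarith [hx.2, pi_pos])

lemma cos_half_nonneg (hx : x ∈ Icc 0 π) : 0 ≤ cos (x / 2) :=
  cos_nonneg_of_mem_Icc ⟨by linarith [hx.1, pi_pos], by linarith [hx.2]⟩

lemma theta_mem_Icc (hx : x ∈ Icc 0 π) : theta x ∈ Icc 0 (π / 2) := by
  have hs := sin_half_nonneg hx
  have hc := cos_half_nonneg hx
  have hr : 2 * sin (x / 2) ≤ √(1 + 3 * sin (x / 2) ^ 2) :=
    le_sqrt_of_sq_le (by nlinarith [sin_sq_add_cos_sq (x / 2)])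
  have hw₀ : 0 ≤ 2 * sin (x / 2) / (cos (x / 2) + √(1 + 3 * sin (x / 2) ^ 2)) := by positivity
  have hw₁ : 2 * sin (x / 2) / (cos (x / 2) + √(1 + 3 * sin (x / 2) ^ 2)) ≤ 1 :=
    div_le_one_of_le₀ (by linarith) (by positivity)
  constructor
  · rw [theta]
    linarith [arctan_nonneg.mpr hw₀]
  · rw [theta]
    linarith [arctan_mono hw₁, arctan_one]

lemma sub_pi_div_two_le_theta (hx : x ∈ Icc 0 π) : x - π / 2 ≤ theta x := by
  have hc := cos_half_nonneg hx
  have hcos : cos (theta x - x) = cos (x / 2) * (cos (x / 2) ^ 2 + 3 * sin (x / 2) ^ 2) /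
      √(1 + 3 * sin (x / 2) ^ 2) := by
    have hcx : cos x = cos (x / 2) ^ 2 - sin (x / 2) ^ 2 := by rw [← cos_two_mul']; ring_nf
    rw [cos_sub, cos_theta hc, sin_theta hc, hcx, sin_eq_two_mul_sin_half_mul_cos_half x]
    ring
  have h : 0 ≤ sin (theta x - x + π / 2) := by
    rw [sin_add_pi_div_two, hcos]
    positivity
  by_contra! hlt
  have := sin_neg_of_neg_of_neg_pi_lt (x := theta x - x + π / 2) (by linarith)
    (by linarith [(theta_mem_Icc hx).1, hx.2])
  linarith

lemma theta_le (hx : x ∈ Icc 0 π) : theta x ≤ x / 2 + π / 6 := by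
  have hs := sin_half_nonneg hx
  have hc := cos_half_nonneg hx
  have hsin : sin (theta x - x / 2) =
      sin (x / 2) * cos (x / 2) / √(1 + 3 * sin (x / 2) ^ 2) := by
    rw [sin_sub, cos_theta hc, sin_theta hc]
    ring
  have hle : sin (theta x - x / 2) ≤ 1 / 2 := by
    rw [hsin]
    calc sin (x / 2) * cos (x / 2) / √(1 + 3 * sin (x / 2) ^ 2)
        ≤ sin (x / 2) * cos (x / 2) :=
          div_le_self (by positivity) (one_le_sqrt_one_add_three_mul_sin_sq _)
      _ ≤ 1 / 2 := by nlinarith [sin_sq_add_cos_sq (x / 2), sq_nonneg (sin (x / 2) - cos (x / 2))]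
  by_contra! hlt
  have := sin_lt_sin_of_lt_of_le_pi_div_two (x := π / 6) (y := theta x - x / 2)
    (by linarith [pi_pos])
    (by linarith [(theta_mem_Icc hx).2, hx.1]) (by linarith)
  rw [sin_pi_div_six] at this
  linarith

lemma two_mul_sin_half_mul_cos_le (hc : 0 ≤ cos (x / 2)) {δ : ℝ} (h₀ : theta x ≤ δ)
    (h₁ : δ ≤ theta x + π) : 2 * sin (x / 2) * cos δ ≤ cos (x / 2) * sin δ := by
  have hr : 0 < √(1 + 3 * sin (x / 2) ^ 2) :=
    zero_lt_one.trans_le (one_le_sqrt_one_add_three_mul_sin_sq _)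
  have h : sin (δ - theta x) * √(1 + 3 * sin (x / 2) ^ 2) =
      cos (x / 2) * sin δ - 2 * sin (x / 2) * cos δ := by
    rw [sin_sub, sin_theta hc, cos_theta hc]
    field_simp
  linarith [mul_nonneg (sin_nonneg_of_nonneg_of_le_pi (sub_nonneg.2 h₀) (by linarith)) hr.le]

end Theta

section KeyInequalities

variable {x δ : ℝ}

lemma cos_nonneg_or_half_le_sin (hδ : δ ∈ Icc 0 (5 * π / 6)) :
    0 ≤ cos δ ∨ 1 / 2 ≤ sin δ := by
  rcases le_or_gt δ (π / 2) with h | h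
  · exact Or.inl (cos_nonneg_of_mem_Icc ⟨by linarith [hδ.1, pi_pos], h⟩)
  · right
    rw [← sin_pi_sub, ← sin_pi_div_six]
    exact sin_le_sin_of_le_of_le_pi_div_two (by linarith [pi_pos]) (by linarith)
      (by linarith [hδ.2])

lemma sin_add_nat_mul_le (hx : x ∈ Icc 0 π) (hδ : δ ∈ Icc 0 (5 * π / 6))
    (hkc : 2 * sin (x / 2) * cos δ ≤ cos (x / 2) * sin δ) (n : ℕ) :
    sin (δ + n * x) ≤ (n + 1) * sin δ := by
  have hsδ : 0 ≤ sin δ := sin_nonneg_of_nonneg_of_le_pi hδ.1 (by linarith [hδ.2, pi_pos])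
  have hc := cos_half_nonneg hx
  rcases cos_nonneg_or_half_le_sin hδ with hcos | hsin
  · have h₁ : sin δ * cos (n * x) ≤ sin δ := mul_le_of_le_one_right hsδ (cos_le_one _)
    have h₂ : cos δ * sin (n * x) ≤ n * sin δ :=
      calc cos δ * sin (n * x) ≤ cos δ * (n * |sin x|) :=
            mul_le_mul_of_nonneg_left ((le_abs_self _).trans (abs_sin_nat_mul_le n x)) hcos
        _ = n * cos (x / 2) * (2 * sin (x / 2) * cos δ) := by
            rw [abs_of_nonneg (sin_nonneg_of_nonneg_of_le_pi hx.1 hx.2),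
              sin_eq_two_mul_sin_half_mul_cos_half]
            ring
        _ ≤ n * cos (x / 2) * (cos (x / 2) * sin δ) := by gcongr
        _ ≤ n * sin δ := by
            have := mul_nonneg (mul_nonneg n.cast_nonneg hsδ)
              (sub_nonneg.2 (cos_sq_le_one (x / 2)))
            linarith
    rw [sin_add]
    linarith
  · rcases n with _ | n
    · simp
    · push_cast
      nlinarith [sin_le_one (δ + (n + 1) * x), (n.cast_nonneg : (0 : ℝ) ≤ n)]

lemma cos_half_mul_sin_three_mul_le (hs : 0 ≤ sin (x / 2)) :
    cos (x / 2) * sin (3 * x) ≤ 2 * sin (x / 2) * (2 + cos (3 * x)) := by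
  have hcx : cos x = 1 - 2 * sin (x / 2) ^ 2 := by rw [← cos_two_mul_eq_one_sub]; ring_nf
  rw [sin_three_mul, cos_three_mul, hcx, sin_eq_two_mul_sin_half_mul_cos_half x]
  have h : 0 ≤ sin (x / 2) ^ 3 * (1 + 16 * sin (x / 2) ^ 2 * cos (x / 2) ^ 2) := by positivity
  linear_combination 2 * h - (32 * sin (x / 2) ^ 3 * cos (x / 2) ^ 2 - 6 * sin (x / 2)
    - 64 * sin (x / 2) ^ 5 + 32 * sin (x / 2) ^ 3) * sin_sq_add_cos_sq (x / 2)

lemma sq_mul_lt_one_of_four_mul_sin_half_sq_mul_lt (hx : x ∈ Icc 0 π) {K : ℝ} (hK : 0 ≤ K)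
    (h : 4 * sin (x / 2) ^ 2 * K < cos (x / 2) ^ 2) : x ^ 2 * K < 1 := by
  have hc2 : 0 < cos (x / 2) ^ 2 := by nlinarith
  have hxc : x / 2 * cos (x / 2) ≤ sin (x / 2) :=
    mul_cos_le_sin (by linarith [hx.1]) (by linarith [hx.2])
  have hxc2 : x ^ 2 * cos (x / 2) ^ 2 ≤ 4 * sin (x / 2) ^ 2 := by
    have := mul_nonneg (by linarith [hx.1] : 0 ≤ x / 2) (cos_half_nonneg hx)
    nlinarith
  have : x ^ 2 * K * cos (x / 2) ^ 2 < 1 * cos (x / 2) ^ 2 := by nlinarith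
  exact lt_of_mul_lt_mul_right this hc2.le

/-- The Taylor upper bound for `sin (M x)` lies below the product of the Taylor lower bounds for
`M - 1 + cos (M x)` and `2 sin (x / 2)`. -/
lemma sub_cube_add_quintic_le_mul {M : ℝ} (hM : 4 ≤ M) (hx : 0 ≤ x)
    (h : x ^ 2 * (M * (M - 2)) ≤ 1) :
    M * x - (M * x) ^ 3 / 6 + (M * x) ^ 5 / 120 ≤ (M - M ^ 2 * x ^ 2 / 2) * (x - x ^ 3 / 24) := by
  have hB : 0 ≤ M ^ 5 / 120 - M ^ 2 / 48 := by nlinarith [pow_le_pow_left₀ (by norm_num) hM 3]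
  have hMM : 0 < M * (M - 2) := by nlinarith
  have hpoly : M ^ 5 / 120 - M ^ 2 / 48 ≤ (M ^ 3 / 6 - M ^ 2 / 2 - M / 24) * (M * (M - 2)) := by
    have h4 : 0 ≤ M - 4 := by linarith
    nlinarith [mul_nonneg (mul_nonneg h4 h4) (mul_nonneg h4 h4), mul_nonneg (mul_nonneg h4 h4) h4,
      mul_nonneg h4 h4]
  have hcoef : x ^ 2 * (M ^ 5 / 120 - M ^ 2 / 48) ≤ M ^ 3 / 6 - M ^ 2 / 2 - M / 24 := by
    have : x ^ 2 * (M ^ 5 / 120 - M ^ 2 / 48) * (M * (M - 2)) ≤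
        (M ^ 3 / 6 - M ^ 2 / 2 - M / 24) * (M * (M - 2)) := by
      nlinarith [mul_le_mul_of_nonneg_right h hB]
    exact le_of_mul_le_mul_right this hMM
  nlinarith [mul_nonneg (pow_nonneg hx 3) (sub_nonneg.2 hcoef)]

lemma cos_half_mul_sin_mul_le {M : ℝ} (hM : 4 ≤ M) (hx : 0 ≤ x)
    (h : x ^ 2 * (M * (M - 2)) ≤ 1) :
    cos (x / 2) * sin (M * x) ≤ 2 * sin (x / 2) * (M - 1 + cos (M * x)) := by
  have hx2 : x ^ 2 ≤ 1 / 8 := by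
    nlinarith [mul_le_mul_of_nonneg_left (show 8 ≤ M * (M - 2) by nlinarith) (sq_nonneg x)]
  have hMx2 : M * x ^ 2 ≤ 1 / 2 := by nlinarith
  have hsin : x - x ^ 3 / 24 ≤ 2 * sin (x / 2) := by
    have := sin_ge_sub_cube (x := x / 2) (by linarith)
    linarith
  have hx24 : 0 ≤ x - x ^ 3 / 24 := by nlinarith
  have hcos : M - M ^ 2 * x ^ 2 / 2 ≤ M - 1 + cos (M * x) := by
    have := one_sub_sq_div_two_le_cos (x := M * x)
    linarith
  have hcos₀ : 0 ≤ M - M ^ 2 * x ^ 2 / 2 := by nlinarith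
  have hrhs : (M - M ^ 2 * x ^ 2 / 2) * (x - x ^ 3 / 24) ≤
      2 * sin (x / 2) * (M - 1 + cos (M * x)) := by
    rw [mul_comm (2 * sin (x / 2))]
    exact mul_le_mul hcos hsin hx24 (hcos₀.trans hcos)
  rcases le_or_gt (sin (M * x)) 0 with hneg | hpos
  · have hc : 0 ≤ cos (x / 2) := by
      have := one_sub_sq_div_two_le_cos (x := x / 2)
      nlinarith
    nlinarith [mul_nonpos_of_nonneg_of_nonpos hc hneg]
  · calc cos (x / 2) * sin (M * x) ≤ sin (M * x) := mul_le_of_le_one_left hpos.le (cos_le_one _)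
      _ ≤ M * x - (M * x) ^ 3 / 6 + (M * x) ^ 5 / 120 :=
          sin_le_sub_cube_add_quintic (mul_nonneg (by linarith) hx)
      _ ≤ (M - M ^ 2 * x ^ 2 / 2) * (x - x ^ 3 / 24) := sub_cube_add_quintic_le_mul hM hx h
      _ ≤ 2 * sin (x / 2) * (M - 1 + cos (M * x)) := hrhs

lemma four_mul_sin_half_sq_mul_lt_cos_half_sq (hx : x ∈ Icc 0 π) (hsδ : 0 ≤ sin δ)
    (hcos : 0 ≤ cos δ) (hkc : 2 * sin (x / 2) * cos δ ≤ cos (x / 2) * sin δ) {M : ℝ}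
    (hM : 1 ≤ M) (hsmall : (M - 1) * sin δ < 1) :
    4 * sin (x / 2) ^ 2 * (M * (M - 2)) < cos (x / 2) ^ 2 := by
  have hs := sin_half_nonneg hx
  have hr := one_le_sqrt_one_add_three_mul_sin_sq (x / 2)
  have hr2 : √(1 + 3 * sin (x / 2) ^ 2) ^ 2 = 1 + 3 * sin (x / 2) ^ 2 := sq_sqrt (by positivity)
  -- `2 sin (x / 2) / √(1 + 3 sin² (x / 2)) = sin θ ≤ sin δ`
  have hsinθ : 2 * sin (x / 2) ≤ √(1 + 3 * sin (x / 2) ^ 2) * sin δ := by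
    refine (pow_le_pow_iff_left₀ (by positivity) (by positivity) two_ne_zero).mp ?_
    have := sin_sq_add_cos_sq δ
    have := sin_sq_add_cos_sq (x / 2)
    have := mul_nonneg (mul_nonneg zero_le_two hs) hcos
    nlinarith
  have h : 2 * sin (x / 2) * (M - 1) < √(1 + 3 * sin (x / 2) ^ 2) := by nlinarith
  have := pow_lt_pow_left₀ h (mul_nonneg (by linarith) (by linarith)) two_ne_zero
  rw [hr2] at this
  linear_combination this - sin_sq_add_cos_sq (x / 2)

lemma sin_nat_mul_sub_le (hx : x ∈ Icc 0 π) (hδ : δ ∈ Icc 0 (5 * π / 6))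
    (hkc : 2 * sin (x / 2) * cos δ ≤ cos (x / 2) * sin δ) {M : ℕ} (hM : 3 ≤ M) :
    sin (M * x - δ) ≤ (M - 1) * sin δ := by
  have hM' : (3 : ℝ) ≤ M := by exact_mod_cast hM
  have hsδ : 0 ≤ sin δ := sin_nonneg_of_nonneg_of_le_pi hδ.1 (by linarith [hδ.2, pi_pos])
  rcases cos_nonneg_or_half_le_sin hδ with hcos | hsin
  swap
  · nlinarith [sin_le_one (M * x - δ)]
  rcases le_or_gt 1 ((M - 1) * sin δ) with hbig | hsmall
  · linarith [sin_le_one (M * x - δ)]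
  have hK : 0 ≤ (M : ℝ) * (M - 2) := by nlinarith
  have hx_small :=
    four_mul_sin_half_sq_mul_lt_cos_half_sq hx hsδ hcos hkc (by linarith) hsmall
  have hc₀ : 0 < cos (x / 2) := by
    have : 0 < cos (x / 2) ^ 2 := lt_of_le_of_lt (by positivity) hx_small
    exact lt_of_le_of_ne (cos_half_nonneg hx) (fun h => by simp [← h] at this)
  have hkey : cos (x / 2) * sin (M * x) ≤ 2 * sin (x / 2) * (M - 1 + cos (M * x)) := by
    rcases (show M = 3 ∨ 4 ≤ M by omega) with rfl | hM4
    · have := cos_half_mul_sin_three_mul_le (sin_half_nonneg hx)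
      norm_num
      linarith
    · exact cos_half_mul_sin_mul_le (by exact_mod_cast hM4) hx.1
        (sq_mul_lt_one_of_four_mul_sin_half_sq_mul_lt hx hK hx_small).le
  have hA : 0 ≤ M - 1 + cos (M * x) := by linarith [neg_one_le_cos (M * x)]
  have : cos (x / 2) * sin (M * x - δ) ≤ cos (x / 2) * ((M - 1) * sin δ) := by
    rw [sin_sub]
    linear_combination mul_le_mul_of_nonneg_right hkey hcos + mul_le_mul_of_nonneg_left hkc hA
  exact le_of_mul_le_mul_left this hc₀

lemma sin_add_sub_one_mul_sub_mul_sin_div_nonpos (hx : x ∈ Icc 0 π)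
    (hδ : δ ∈ Icc 0 (5 * π / 6))
    (hkc : 2 * sin (x / 2) * cos δ ≤ cos (x / 2) * sin δ) {q : ℤ} (hq : 2 ≤ |q|) :
    (sin (δ + (q - 1) * x) - q * sin δ) / (q - 1) ≤ 0 := by
  rcases le_abs.mp hq with hq | hq
  · obtain ⟨n, rfl⟩ : ∃ n : ℕ, q = n + 1 := ⟨(q - 1).toNat, by omega⟩
    push_cast
    rw [add_sub_cancel_right]
    apply div_nonpos_of_nonpos_of_nonneg
    · linarith [sin_add_nat_mul_le hx hδ hkc n]
    · simp
  · obtain ⟨M, rfl⟩ : ∃ M : ℕ, q = 1 - M := ⟨(1 - q).toNat, by omega⟩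
    push_cast
    apply div_nonpos_of_nonneg_of_nonpos
    · have := sin_nat_mul_sub_le hx hδ hkc (M := M) (by omega)
      rw [show δ + (1 - M - 1) * x = -(M * x - δ) by ring, sin_neg]
      linarith
    · simp

end KeyInequalities

/-- Nonpositivity of the generating function `f_{1,q}(α,x)` of the symmetric part of the
WSLD matrix `A_{1,q}^α` for `|q| ≥ 2` and `x ∈ [0,π]`. -/
theorem stmt12 (α : ℝ) (h1 : 1 < α) (h2 : α < 2) (q : ℤ) (hq : 2 ≤ |q|)
    (x : ℝ) (hx : x ∈ Set.Icc (0 : ℝ) Real.pi) :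
    (1 / ((q : ℝ) - 1)) * (2 * Real.sin (x / 2)) ^ α *
        (1 + 3 * Real.sin (x / 2) ^ 2) ^ (α / 2) *
        ((q : ℝ) * Real.cos (α * (x - Real.pi / 2 -
              2 * Real.arctan (2 * Real.sin (x / 2) /
                (Real.cos (x / 2) + Real.sqrt (1 + 3 * Real.sin (x / 2) ^ 2)))) - x) -
          Real.cos (α * (x - Real.pi / 2 -
              2 * Real.arctan (2 * Real.sin (x / 2) /
                (Real.cos (x / 2) + Real.sqrt (1 + 3 * Real.sin (x / 2) ^ 2)))) - (q : ℝ) * x))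
      ≤ 0 := by
  change _ * _ * _ *
    (_ * cos (α * (x - π / 2 - theta x) - x) - cos (α * (x - π / 2 - theta x) - q * x)) ≤ 0
  have hθ := theta_mem_Icc hx
  have hθ₁ := sub_pi_div_two_le_theta hx
  have hθ₂ := theta_le hx
  set δ := theta x + (α - 1) * (theta x + π / 2 - x) with hδ
  have hθδ : theta x ≤ δ := le_add_of_nonneg_right (by nlinarith)
  have hδI : δ ∈ Icc 0 (5 * π / 6) := ⟨hθ.1.trans hθδ, by nlinarith⟩
  have hkc :=
    two_mul_sin_half_mul_cos_le (cos_half_nonneg hx) hθδ (by linarith [hδI.2, hθ.1, pi_pos])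
  have hu : α * (x - π / 2 - theta x) = x - π / 2 - δ := by rw [hδ]; ring
  have hcos₁ : cos (α * (x - π / 2 - theta x) - x) = -sin δ := by
    rw [hu, show x - π / 2 - δ - x = -(δ + π / 2) by ring, cos_neg, cos_add_pi_div_two]
  have hcos₂ : cos (α * (x - π / 2 - theta x) - q * x) = -sin (δ + (q - 1) * x) := by
    rw [hu, show x - π / 2 - δ - q * x = -(δ + (q - 1) * x + π / 2) by ring, cos_neg,
      cos_add_pi_div_two]
  have hfactor : 0 ≤ (2 * sin (x / 2)) ^ α * (1 + 3 * sin (x / 2) ^ 2) ^ (α / 2) :=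
    mul_nonneg (rpow_nonneg (by linarith [sin_half_nonneg hx]) _) (rpow_nonneg (by positivity) _)
  rw [hcos₁, hcos₂]
  calc _ = (2 * sin (x / 2)) ^ α * (1 + 3 * sin (x / 2) ^ 2) ^ (α / 2) *
        ((sin (δ + (q - 1) * x) - q * sin δ) / (q - 1)) := by ring
    _ ≤ 0 := mul_nonpos_of_nonneg_of_nonpos hfactor
        (sin_add_sub_one_mul_sub_mul_sin_div_nonpos hx hδI hkc hq)
end

section
/- Let A be an n×n negative definite real matrix, let D be an n×n diagonal real matrix with strictly positive diagonal entries, and let κ ≥ 0 be a real constant. Then every eigenvalue λ ∈ ℂ of the matrix D·(A + κ·Aᵀ), regarded as a complex matrix, satisfies Re λ < 0. -/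
open Matrix

/-- A real square matrix `M` is negative definite if `xᵀ M x < 0` for every nonzero `x`. -/
def NegDef {n : ℕ} (M : Matrix (Fin n) (Fin n) ℝ) : Prop :=
  ∀ x : Fin n → ℝ, x ≠ 0 → x ⬝ᵥ M.mulVec x < 0

/-- If `A` is negative definite, `D` is diagonal with positive entries, and `κ ≥ 0`,
then every eigenvalue of `D (A + κ Aᵀ)` has negative real part. -/
theorem stmt16 {n : ℕ} (A : Matrix (Fin n) (Fin n) ℝ) (hA : NegDef A)
    (d : Fin n → ℝ) (hd : ∀ i, 0 < d i) (κ : ℝ) (hκ : 0 ≤ κ) :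
    ∀ μ ∈ spectrum ℂ ((Matrix.diagonal d * (A + κ • Aᵀ)).map Complex.ofReal), μ.re < 0 := by
  intro μ hμ
  set B : Matrix (Fin n) (Fin n) ℝ := A + κ • Aᵀ with hBdef
  -- B is negative definite
  have hBneg : NegDef B := by
    intro x hx
    have h1 : x ⬝ᵥ Aᵀ.mulVec x = x ⬝ᵥ A.mulVec x := by
      simp only [dotProduct, mulVec, transpose_apply, Finset.mul_sum, Finset.sum_mul]
      rw [Finset.sum_comm]
      apply Finset.sum_congr rfl; intro i _
      apply Finset.sum_congr rfl; intro j _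
      ring
    have h2 : x ⬝ᵥ B.mulVec x = (1 + κ) * (x ⬝ᵥ A.mulVec x) := by
      simp only [hBdef, Matrix.add_mulVec, Matrix.smul_mulVec, dotProduct_add,
        dotProduct_smul, smul_eq_mul, h1]
      ring
    rw [h2]
    nlinarith [hA x hx]
  have hBnp : ∀ x : Fin n → ℝ, x ⬝ᵥ B.mulVec x ≤ 0 := by
    intro x
    by_cases h : x = 0
    · simp [h]
    · exact (hBneg x h).le
  -- extract eigenvector
  rw [spectrum.mem_iff, Matrix.isUnit_iff_isUnit_det, isUnit_iff_ne_zero, not_not] at hμ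
  obtain ⟨v, hv0, hv⟩ := Matrix.exists_mulVec_eq_zero_iff.mpr hμ
  -- eigenvalue equation, entrywise
  have heig : ∀ i, μ * v i = (d i : ℂ) * (∑ j, (B i j : ℂ) * v j) := by
    intro i
    have h := congrFun hv i
    simp only [Algebra.algebraMap_eq_smul_one, Matrix.mulVec, dotProduct,
      Matrix.sub_apply, Matrix.smul_apply, Matrix.one_apply, smul_eq_mul,
      Matrix.map_apply, Matrix.diagonal_mul, Pi.zero_apply, sub_mul,
      Finset.sum_sub_distrib, sub_eq_zero, mul_ite, mul_one, mul_zero, ite_mul, zero_mul,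
      Finset.sum_ite_eq, Finset.mem_univ, if_true] at h
    rw [h, Finset.mul_sum]
    push_cast
    apply Finset.sum_congr rfl; intro j _; ring
  -- the quadratic form value
  set s : ℂ := ∑ i, (starRingEnd ℂ) (v i) * (∑ j, (B i j : ℂ) * v j) with hsdef
  set t : ℝ := ∑ i, Complex.normSq (v i) / d i with htdef
  have ht : 0 < t := by
    obtain ⟨i0, hi0⟩ := Function.ne_iff.mp hv0
    refine Finset.sum_pos' (fun i _ => div_nonneg (Complex.normSq_nonneg _) (hd i).le)
      ⟨i0, Finset.mem_univ i0, div_pos (Complex.normSq_pos.mpr hi0) (hd i0)⟩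
  -- s = μ * t
  have hst : s = μ * (t : ℂ) := by
    rw [hsdef, htdef]
    push_cast
    rw [Finset.mul_sum]
    apply Finset.sum_congr rfl; intro i _
    have hdi : (d i : ℂ) ≠ 0 := by
      exact_mod_cast (hd i).ne'
    have hw : (∑ j, (B i j : ℂ) * v j) = μ * v i / (d i : ℂ) := by
      rw [eq_div_iff hdi, mul_comm _ ((d i : ℂ))]
      exact (heig i).symm
    rw [hw]
    rw [Complex.normSq_eq_conj_mul_self]
    field_simp
  -- real part of s via the real quadratic forms
  set x : Fin n → ℝ := fun i => (v i).re with hxdef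
  set y : Fin n → ℝ := fun i => (v i).im with hydef
  have hre : s.re = x ⬝ᵥ B.mulVec x + y ⬝ᵥ B.mulVec y := by
    rw [hsdef]
    simp only [hxdef, hydef, dotProduct, mulVec, Finset.mul_sum, ← Finset.sum_add_distrib,
      Complex.re_sum, Complex.mul_re, Complex.mul_im, Complex.conj_re, Complex.conj_im,
      Complex.ofReal_re, Complex.ofReal_im]
    apply Finset.sum_congr rfl; intro i _
    apply Finset.sum_congr rfl; intro j _
    ring
  -- s.re < 0
  have hxy : x ≠ 0 ∨ y ≠ 0 := by
    by_contra h
    push_neg at h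
    apply hv0
    funext i
    have hx := congrFun h.1 i
    have hy := congrFun h.2 i
    simp only [hxdef, hydef, Pi.zero_apply] at hx hy
    exact Complex.ext hx hy
  have hsre : s.re < 0 := by
    rw [hre]
    rcases hxy with h | h
    · have := hBneg x h
      have := hBnp y
      linarith
    · have := hBneg y h
      have := hBnp x
      linarith
  -- conclude
  have hμt : s.re = μ.re * t := by
    rw [hst]
    simp [Complex.mul_re]
  rw [hμt] at hsre
  nlinarith
end

section
/- Let A be an n×n negative definite real matrix and B an m×m negative definite real matrix, let D (n×n) and E (m×m) be diagonal real matrices with strictly positive diagonal entries, let κ_α ≥ 0, κ_β ≥ 0 be real constants, and let c_x > 0, c_y > 0. Define 𝒜_x = c_x · ( I_m ⊗ (D·(A + κ_α·Aᵀ)) ) and 𝒜_y = c_y · ( (E·(B + κ_β·Bᵀ)) ⊗ I_n ). Then every eigenvalue λ ∈ ℂ of 𝒜_x satisfies Re λ < 0, and every eigenvalue μ ∈ ℂ of 𝒜_y satisfies Re μ < 0. -/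
open Matrix
open scoped Kronecker

/-- From membership in the spectrum, extract an eigenvector. -/
lemma spec_exists_eigenvector {ι : Type*} [Fintype ι] [DecidableEq ι]
    (T : Matrix ι ι ℂ) (μ : ℂ)
    (h : μ ∈ spectrum ℂ T) : ∃ v : ι → ℂ, v ≠ 0 ∧ T.mulVec v = μ • v := by
  rw [spectrum.mem_iff] at h
  rw [Matrix.isUnit_iff_isUnit_det, isUnit_iff_ne_zero, not_not] at h
  rw [← Matrix.exists_mulVec_eq_zero_iff] at h
  obtain ⟨v, hv, hveq⟩ := h
  refine ⟨v, hv, ?_⟩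
  have : (algebraMap ℂ (Matrix ι ι ℂ)) μ = μ • 1 := by
    simp [Algebra.algebraMap_eq_smul_one]
  rw [this, Matrix.sub_mulVec, Matrix.smul_mulVec, Matrix.one_mulVec, sub_eq_zero] at hveq
  exact hveq.symm

/-- Key lemma: if `M` is negative definite, `d` positive, `c > 0`, and `w ≠ 0` satisfies the
eigen-equation for `c • (diagonal d * M)`, then `Re μ < 0`. -/
lemma key_re_neg {N : ℕ} (M : Matrix (Fin N) (Fin N) ℝ) (hM : NegDef M)
    (d : Fin N → ℝ) (hd : ∀ i, 0 < d i) (c : ℝ) (hc : 0 < c)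
    (μ : ℂ) (w : Fin N → ℂ) (hw : w ≠ 0)
    (heq : ∀ j, μ * w j = (c : ℂ) * (d j : ℂ) * ∑ k, (M j k : ℂ) * w k) :
    μ.re < 0 := by
  classical
  set r : ℝ := ∑ j, (d j)⁻¹ * Complex.normSq (w j) with hr
  have hrpos : 0 < r := by
    obtain ⟨j0, hj0⟩ := Function.ne_iff.mp hw
    refine Finset.sum_pos' (fun j _ => mul_nonneg (inv_nonneg.mpr (hd j).le)
      (Complex.normSq_nonneg _)) ⟨j0, Finset.mem_univ _, ?_⟩
    exact mul_pos (inv_pos.mpr (hd j0)) (by simpa [Complex.normSq_pos] using hj0)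
  set L : ℂ := ∑ j, ((d j)⁻¹ : ℂ) * ((starRingEnd ℂ) (w j) * (μ * w j)) with hL
  have hL1 : L = μ * (r : ℂ) := by
    rw [hL, hr]
    push_cast
    rw [Finset.mul_sum]
    refine Finset.sum_congr rfl fun j _ => ?_
    have h1 : (starRingEnd ℂ) (w j) * w j = (Complex.normSq (w j) : ℂ) := by
      rw [mul_comm, Complex.mul_conj]
    calc ((d j)⁻¹ : ℂ) * ((starRingEnd ℂ) (w j) * (μ * w j))
        = μ * (((d j) : ℂ)⁻¹ * ((starRingEnd ℂ) (w j) * w j)) := by ring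
      _ = μ * (((d j) : ℂ)⁻¹ * (Complex.normSq (w j) : ℂ)) := by rw [h1]
  have hL2 : L = (c : ℂ) * ∑ j, ∑ k, (M j k : ℂ) * ((starRingEnd ℂ) (w j) * w k) := by
    rw [hL, Finset.mul_sum]
    refine Finset.sum_congr rfl fun j _ => ?_
    have hdj : ((d j) : ℂ) ≠ 0 := by exact_mod_cast (hd j).ne'
    have hs : ∑ k, (M j k : ℂ) * ((starRingEnd ℂ) (w j) * w k)
        = (starRingEnd ℂ) (w j) * ∑ k, (M j k : ℂ) * w k := by
      rw [Finset.mul_sum]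
      exact Finset.sum_congr rfl fun k _ => by ring
    rw [hs, heq j]
    field_simp
  set a : Fin N → ℝ := fun j => (w j).re with ha
  set b : Fin N → ℝ := fun j => (w j).im with hb
  have hterm : ∀ j k, ((M j k : ℂ) * ((starRingEnd ℂ) (w j) * w k)).re
      = M j k * (a j * a k + b j * b k) := by
    intro j k
    simp [Complex.mul_re, Complex.mul_im, ha, hb]
  have hre2 : L.re = c * ((a ⬝ᵥ M.mulVec a) + (b ⬝ᵥ M.mulVec b)) := by
    rw [hL2, Complex.mul_re]
    simp only [Complex.ofReal_re, Complex.ofReal_im, zero_mul, sub_zero]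
    congr 1
    rw [Complex.re_sum]
    have : ∀ j : Fin N, (∑ k, (M j k : ℂ) * ((starRingEnd ℂ) (w j) * w k)).re
        = a j * (M.mulVec a j) + b j * (M.mulVec b j) := by
      intro j
      rw [Complex.re_sum]
      simp only [hterm]
      simp only [Matrix.mulVec, dotProduct, Finset.mul_sum, ← Finset.sum_add_distrib]
      exact Finset.sum_congr rfl fun k _ => by ring
    simp only [this]
    rw [dotProduct, dotProduct, ← Finset.sum_add_distrib]
  have hre1 : L.re = μ.re * r := by
    rw [hL1]
    simp [Complex.mul_re]
  have hQ : (a ⬝ᵥ M.mulVec a) + (b ⬝ᵥ M.mulVec b) < 0 := by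
    have hab : a ≠ 0 ∨ b ≠ 0 := by
      by_contra h
      push_neg at h
      apply hw
      funext j
      have h1 : a j = 0 := by rw [h.1]; rfl
      have h2 : b j = 0 := by rw [h.2]; rfl
      exact Complex.ext h1 h2
    have hle : ∀ x : Fin N → ℝ, x ⬝ᵥ M.mulVec x ≤ 0 := by
      intro x
      by_cases hx : x = 0
      · simp [hx]
      · exact (hM x hx).le
    rcases hab with h | h
    · have := hM a h; have := hle b; linarith
    · have := hM b h; have := hle a; linarith
  nlinarith [hrpos, mul_pos hc (neg_pos.mpr hQ)]

/-- Negative definiteness is preserved by adding a nonnegative multiple of the transpose. -/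
lemma negdef_add_smul_transpose {N : ℕ} (A : Matrix (Fin N) (Fin N) ℝ) (hA : NegDef A)
    (κ : ℝ) (hκ : 0 ≤ κ) : NegDef (A + κ • Aᵀ) := by
  intro x hx
  have ht : x ⬝ᵥ Aᵀ.mulVec x = x ⬝ᵥ A.mulVec x := by
    rw [Matrix.dotProduct_mulVec, Matrix.vecMul_transpose, dotProduct_comm]
  have hcalc : x ⬝ᵥ (A + κ • Aᵀ).mulVec x = (1 + κ) * (x ⬝ᵥ A.mulVec x) := by
    rw [Matrix.add_mulVec, dotProduct_add, Matrix.smul_mulVec,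
      dotProduct_smul, smul_eq_mul, ht]
    ring
  rw [hcalc]
  have := hA x hx
  nlinarith

/-- Eigen-equation extraction for `c • (I ⊗ₖ P)`. -/
lemma kron_left_eq {m n : ℕ} (P : Matrix (Fin n) (Fin n) ℝ)
    (v : Fin m × Fin n → ℂ) (μ : ℂ) (c : ℝ)
    (hveq : ((c • ((1 : Matrix (Fin m) (Fin m) ℝ) ⊗ₖ P)).map Complex.ofReal).mulVec v = μ • v)
    (j0 : Fin m) (j : Fin n) :
    μ * v (j0, j) = (c : ℂ) * ∑ k, (P j k : ℂ) * v (j0, k) := by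
  have h := congrFun hveq (j0, j)
  simp only [Matrix.mulVec, dotProduct, Matrix.map_apply, Matrix.smul_apply,
    Matrix.kroneckerMap_apply, Matrix.one_apply, Fintype.sum_prod_type, smul_eq_mul,
    Pi.smul_apply] at h
  rw [← h, Finset.sum_eq_single j0]
  · rw [Finset.mul_sum]
    exact Finset.sum_congr rfl fun k _ => by norm_num [mul_assoc]
  · intro b _ hb
    simp [hb.symm]
  · simp

/-- Eigen-equation extraction for `c • (P ⊗ₖ I)`. -/
lemma kron_right_eq {m n : ℕ} (P : Matrix (Fin m) (Fin m) ℝ)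
    (v : Fin m × Fin n → ℂ) (μ : ℂ) (c : ℝ)
    (hveq : ((c • (P ⊗ₖ (1 : Matrix (Fin n) (Fin n) ℝ))).map Complex.ofReal).mulVec v = μ • v)
    (i0 : Fin n) (j : Fin m) :
    μ * v (j, i0) = (c : ℂ) * ∑ k, (P j k : ℂ) * v (k, i0) := by
  have h := congrFun hveq (j, i0)
  simp only [Matrix.mulVec, dotProduct, Matrix.map_apply, Matrix.smul_apply,
    Matrix.kroneckerMap_apply, Matrix.one_apply, Fintype.sum_prod_type, smul_eq_mul,
    Pi.smul_apply] at h
  rw [← h, Finset.mul_sum]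
  refine Finset.sum_congr rfl fun k _ => ?_
  rw [Finset.sum_eq_single i0]
  · norm_num [mul_assoc]
  · intro b _ hb; simp [hb.symm]
  · simp

/-- Every eigenvalue of `𝒜_x = c_x (I ⊗ D(A + κ_α Aᵀ))` and of
`𝒜_y = c_y ((E(B + κ_β Bᵀ)) ⊗ I)` has negative real part. -/
theorem stmt17 {n m : ℕ}
    (A : Matrix (Fin n) (Fin n) ℝ) (hA : NegDef A)
    (B : Matrix (Fin m) (Fin m) ℝ) (hB : NegDef B)
    (d : Fin n → ℝ) (hd : ∀ i, 0 < d i)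
    (e : Fin m → ℝ) (he : ∀ j, 0 < e j)
    (κα κβ : ℝ) (hκα : 0 ≤ κα) (hκβ : 0 ≤ κβ)
    (cx cy : ℝ) (hcx : 0 < cx) (hcy : 0 < cy) :
    (∀ μ ∈ spectrum ℂ
        ((cx • ((1 : Matrix (Fin m) (Fin m) ℝ) ⊗ₖ
          (Matrix.diagonal d * (A + κα • Aᵀ)))).map Complex.ofReal), μ.re < 0) ∧
    (∀ μ ∈ spectrum ℂ
        ((cy • ((Matrix.diagonal e * (B + κβ • Bᵀ)) ⊗ₖ
          (1 : Matrix (Fin n) (Fin n) ℝ))).map Complex.ofReal), μ.re < 0) := by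
  constructor
  · intro μ hμ
    obtain ⟨v, hv, hveq⟩ := spec_exists_eigenvector _ μ hμ
    obtain ⟨p, hp⟩ := Function.ne_iff.mp hv
    set w : Fin n → ℂ := fun i => v (p.1, i) with hwdef
    have hw : w ≠ 0 := by
      refine Function.ne_iff.mpr ⟨p.2, ?_⟩
      simpa [hwdef] using hp
    refine key_re_neg (A + κα • Aᵀ) (negdef_add_smul_transpose A hA κα hκα) d hd cx hcx μ w hw
      fun j => ?_
    have h := kron_left_eq (Matrix.diagonal d * (A + κα • Aᵀ)) v μ cx hveq p.1 j
    rw [h]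
    have : ∀ k, ((Matrix.diagonal d * (A + κα • Aᵀ)) j k : ℂ) = (d j : ℂ) * ((A + κα • Aᵀ) j k : ℂ) := by
      intro k
      rw [Matrix.diagonal_mul]
      push_cast
      ring
    simp only [this, hwdef]
    rw [Finset.mul_sum, Finset.mul_sum]
    exact Finset.sum_congr rfl fun k _ => by ring
  · intro μ hμ
    obtain ⟨v, hv, hveq⟩ := spec_exists_eigenvector _ μ hμ
    obtain ⟨p, hp⟩ := Function.ne_iff.mp hv
    set w : Fin m → ℂ := fun j => v (j, p.2) with hwdef
    have hw : w ≠ 0 := by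
      refine Function.ne_iff.mpr ⟨p.1, ?_⟩
      simpa [hwdef] using hp
    refine key_re_neg (B + κβ • Bᵀ) (negdef_add_smul_transpose B hB κβ hκβ) e he cy hcy μ w hw
      fun j => ?_
    have h := kron_right_eq (Matrix.diagonal e * (B + κβ • Bᵀ)) v μ cy hveq p.2 j
    rw [h]
    have : ∀ k, ((Matrix.diagonal e * (B + κβ • Bᵀ)) j k : ℂ) = (e j : ℂ) * ((B + κβ • Bᵀ) j k : ℂ) := by
      intro k
      rw [Matrix.diagonal_mul]
      push_cast
      ring
    simp only [this, hwdef]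
    rw [Finset.mul_sum, Finset.mul_sum]
    exact Finset.sum_congr rfl fun k _ => by ring
end

section
/- Let M be an n×n negative definite real matrix, let D be an n×n diagonal real matrix with strictly positive diagonal entries, let κ ≥ 0 and c > 0 be real constants, and set A = c·D·(M + κ·Mᵀ). Then I − A is invertible and every eigenvalue μ ∈ ℂ of (I − A)⁻¹·(I + A), regarded as a complex matrix, satisfies |μ| < 1; in particular the spectral radius of (I − A)⁻¹·(I + A) is strictly less than 1. (This is the unconditional stability of the one-dimensional Crank–Nicolson WSLD scheme, where c = τ/(2h^α), D = D₊ is the diagonal matrix of variable coefficients, and M is the fourth-order WSLD matrix.) -/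
open Matrix

/-!
`B = c (M + κ Mᵀ)` is negative definite because `xᵀ Mᵀ x = xᵀ M x`. If `D B v = λ v` for a
nonzero complex `v = u + i w`, then `v* B v = λ · v* D⁻¹ v`; the left side has real part
`uᵀ B u + wᵀ B w < 0` and `v* D⁻¹ v > 0`, so `Re λ < 0`. In particular `1` is not an
eigenvalue of `A = D B`, so `I - A` is invertible. An eigenvector of `(I - A)⁻¹ (I + A)` for
`μ` is an eigenvector of `A` for `(μ - 1) / (μ + 1)`, whose real part is
`(|μ|² - 1) / |μ + 1|²`; hence `|μ| < 1`. The spectrum is finite, so the spectral radius is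
attained and is `< 1` too.
-/

open Complex

theorem Matrix.mem_spectrum_iff_exists_mulVec_eq_smul {K ι : Type*} [Field K] [Fintype ι]
    [DecidableEq ι] {A : Matrix ι ι K} {μ : K} :
    μ ∈ spectrum K A ↔ ∃ v ≠ 0, A *ᵥ v = μ • v := by
  rw [← spectrum_toLin', ← Module.End.hasEigenvalue_iff_mem_spectrum]
  refine ⟨fun hμ => ?_, fun ⟨v, hv, hAv⟩ => Module.End.hasEigenvalue_of_hasEigenvector
    ⟨Module.End.mem_eigenspace_iff.mpr (by simpa using hAv), hv⟩⟩
  obtain ⟨v, hv⟩ := hμ.exists_hasEigenvector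
  exact ⟨v, hv.2, by simpa using Module.End.mem_eigenspace_iff.mp hv.1⟩

theorem Matrix.isUnit_of_isUnit_map {ι R S : Type*} [Fintype ι] [DecidableEq ι] [CommRing R]
    [CommRing S] (f : R →+* S) [IsLocalHom f] {A : Matrix ι ι R} (h : IsUnit (A.map f)) :
    IsUnit A := by
  rw [isUnit_iff_isUnit_det] at h ⊢
  rw [← RingHom.mapMatrix_apply, ← RingHom.map_det] at h
  exact (isUnit_map_iff f _).mp h

theorem spectralRadius_lt_of_finite {𝕜 A : Type*} [NormedField 𝕜] [Ring A] [Algebra 𝕜 A]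
    {a : A} (hfin : (spectrum 𝕜 a).Finite) {r : NNReal} (hr : 0 < r)
    (h : ∀ k ∈ spectrum 𝕜 a, ‖k‖₊ < r) : spectralRadius 𝕜 a < r := by
  have hsup : spectralRadius 𝕜 a = hfin.toFinset.sup fun k => (‖k‖₊ : ENNReal) := by
    simp [spectralRadius, Finset.sup_eq_iSup]
  rw [hsup, Finset.sup_lt_iff (by simpa using hr)]
  simpa using h

theorem Matrix.sub_one_div_add_one_mem_spectrum_of_sub_mul_eq_add {K ι : Type*} [Field K]
    [CharZero K] [Fintype ι] [DecidableEq ι] {A T : Matrix ι ι K} (hT : (1 - A) * T = 1 + A)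
    {μ : K} (hμ : μ ∈ spectrum K T) : (μ - 1) / (μ + 1) ∈ spectrum K A := by
  obtain ⟨v, hv, hTv⟩ := mem_spectrum_iff_exists_mulVec_eq_smul.mp hμ
  have hAv : (μ + 1) • A *ᵥ v = (μ - 1) • v := by
    have := congrArg (· *ᵥ v) hT
    simp only [← mulVec_mulVec, hTv, mulVec_smul, sub_mulVec, add_mulVec, one_mulVec] at this
    linear_combination (norm := module) -this
  have hμ1 : μ + 1 ≠ 0 := by
    intro hμ1
    rw [hμ1, zero_smul, eq_comm, smul_eq_zero] at hAv
    refine hAv.elim (fun hμ2 => ?_) hv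
    exact two_ne_zero (α := K) (by linear_combination hμ1 - hμ2)
  refine mem_spectrum_iff_exists_mulVec_eq_smul.mpr ⟨v, hv, ?_⟩
  rw [div_eq_inv_mul, mul_smul, ← hAv, inv_smul_smul₀ hμ1]

theorem Complex.norm_lt_one_of_re_sub_one_div_add_one_neg {μ : ℂ}
    (h : ((μ - 1) / (μ + 1)).re < 0) : ‖μ‖ < 1 := by
  have hre : ((μ - 1) / (μ + 1)).re = (normSq μ - 1) / normSq (μ + 1) := by
    rw [div_re, ← add_div]
    congr 1
    simp only [sub_re, add_re, one_re, sub_im, add_im, one_im, normSq_apply]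
    ring
  rw [hre, div_neg_iff] at h
  have hsq : normSq μ < 1 := by
    rcases h with ⟨-, h⟩ | ⟨h, -⟩
    · exact absurd h (normSq_nonneg _).not_gt
    · linarith
  rw [← sq_lt_one_iff₀ (norm_nonneg μ), Complex.sq_norm]
  exact hsq

theorem Matrix.re_star_dotProduct_map_ofReal_mulVec {ι : Type*} [Fintype ι]
    (B : Matrix ι ι ℝ) (v : ι → ℂ) :
    (star v ⬝ᵥ B.map ofReal *ᵥ v).re =
      (fun i => (v i).re) ⬝ᵥ B *ᵥ (fun i => (v i).re) +
        (fun i => (v i).im) ⬝ᵥ B *ᵥ (fun i => (v i).im) := by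
  simp only [dotProduct, mulVec, map_apply, Pi.star_apply, re_sum, Finset.mul_sum,
    ← Finset.sum_add_distrib]
  refine Finset.sum_congr rfl fun i _ => Finset.sum_congr rfl fun j _ => ?_
  simp only [mul_re, mul_im, ofReal_re, ofReal_im, RCLike.star_def, conj_re, conj_im]
  ring

namespace NegDef

variable {n : ℕ} {B : Matrix (Fin n) (Fin n) ℝ}

theorem smul_add_smul_transpose (hB : NegDef B) {c κ : ℝ} (hc : 0 < c) (hκ : 0 ≤ κ) :
    NegDef (c • (B + κ • Bᵀ)) := by
  intro x hx
  have htr : x ⬝ᵥ Bᵀ *ᵥ x = x ⬝ᵥ B *ᵥ x := by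
    rw [mulVec_transpose, dotProduct_comm, ← dotProduct_mulVec]
  have hexp : x ⬝ᵥ (c • (B + κ • Bᵀ)) *ᵥ x = c * (1 + κ) * (x ⬝ᵥ B *ᵥ x) := by
    simp only [smul_mulVec, add_mulVec, dotProduct_smul, dotProduct_add, smul_eq_mul, htr]
    ring
  rw [hexp]
  exact mul_neg_of_pos_of_neg (by positivity) (hB x hx)

theorem re_star_dotProduct_map_ofReal_mulVec_neg (hB : NegDef B) {v : Fin n → ℂ}
    (hv : v ≠ 0) :
    (star v ⬝ᵥ B.map ofReal *ᵥ v).re < 0 := by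
  have hle : ∀ x, x ⬝ᵥ B *ᵥ x ≤ 0 := fun x => by
    rcases eq_or_ne x 0 with rfl | hx
    · simp
    · exact (hB x hx).le
  have hre_or_im : (fun i => (v i).re) ≠ 0 ∨ (fun i => (v i).im) ≠ 0 := by
    by_contra! h
    exact hv (funext fun i => Complex.ext (congrFun h.1 i) (congrFun h.2 i))
  rw [re_star_dotProduct_map_ofReal_mulVec]
  rcases hre_or_im with h | h
  · linarith [hB _ h, hle fun i => (v i).im]
  · linarith [hB _ h, hle fun i => (v i).re]

theorem re_neg_of_diagonal_mul_mulVec_eq_smul (hB : NegDef B) {d : Fin n → ℝ}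
    (hd : ∀ i, 0 < d i) {μ : ℂ} {v : Fin n → ℂ} (hv : v ≠ 0)
    (h : (diagonal d * B).map ofReal *ᵥ v = μ • v) : μ.re < 0 := by
  have hd' : ∀ i, (d i : ℂ) ≠ 0 := fun i => ofReal_ne_zero.mpr (hd i).ne'
  have hBv : ∀ i, (B.map ofReal *ᵥ v) i = μ * v i / d i := by
    intro i
    have hi := congrFun h i
    rw [show (ofReal : ℝ → ℂ) = ofRealHom from rfl, Matrix.map_mul, diagonal_map (map_zero _),
      ← mulVec_mulVec, mulVec_diagonal] at hi
    rw [eq_div_iff (hd' i), mul_comm]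
    exact hi
  set p : ℝ := ∑ i, normSq (v i) / d i
  have hp : 0 < p := by
    obtain ⟨i₀, hi₀⟩ := Function.ne_iff.mp hv
    refine Finset.sum_pos' (fun i _ => div_nonneg (normSq_nonneg _) (hd i).le) ?_
    exact ⟨i₀, Finset.mem_univ _, div_pos (normSq_pos.mpr hi₀) (hd i₀)⟩
  have hquad : star v ⬝ᵥ B.map ofReal *ᵥ v = μ * p := by
    simp only [p, dotProduct, hBv, ofReal_sum, ofReal_div, Finset.mul_sum,
      normSq_eq_conj_mul_self, Pi.star_apply, RCLike.star_def]
    refine Finset.sum_congr rfl fun i _ => ?_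
    ring
  have hneg := hB.re_star_dotProduct_map_ofReal_mulVec_neg hv
  rw [hquad, re_mul_ofReal] at hneg
  exact neg_of_mul_neg_left hneg hp.le

theorem re_neg_of_mem_spectrum_diagonal_mul (hB : NegDef B) {d : Fin n → ℝ}
    (hd : ∀ i, 0 < d i) {μ : ℂ}
    (hμ : μ ∈ spectrum ℂ ((diagonal d * B).map ofReal)) : μ.re < 0 := by
  obtain ⟨v, hv, hBv⟩ := mem_spectrum_iff_exists_mulVec_eq_smul.mp hμ
  exact hB.re_neg_of_diagonal_mul_mulVec_eq_smul hd hv hBv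

end NegDef

/-- Unconditional stability of the 1D Crank–Nicolson WSLD scheme: with
`A = c D (M + κ Mᵀ)`, the matrix `I - A` is invertible and every eigenvalue of
`(I - A)⁻¹ (I + A)` has modulus `< 1`; in particular its spectral radius is `< 1`. -/
theorem stmt18 {n : ℕ} (M : Matrix (Fin n) (Fin n) ℝ) (hM : NegDef M)
    (d : Fin n → ℝ) (hd : ∀ i, 0 < d i) (κ : ℝ) (hκ : 0 ≤ κ) (c : ℝ) (hc : 0 < c)
    (A : Matrix (Fin n) (Fin n) ℝ)
    (hA : A = c • (Matrix.diagonal d * (M + κ • Mᵀ))) :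
    IsUnit (1 - A) ∧
    (∀ μ ∈ spectrum ℂ (((1 - A)⁻¹ * (1 + A)).map Complex.ofReal), ‖μ‖ < 1) ∧
    spectralRadius ℂ (((1 - A)⁻¹ * (1 + A)).map Complex.ofReal) < 1 := by
  have hA' : A = diagonal d * (c • (M + κ • Mᵀ)) := by rw [hA, Matrix.mul_smul]
  have hspec : ∀ μ ∈ spectrum ℂ (A.map ofReal), μ.re < 0 := fun μ hμ =>
    (hM.smul_add_smul_transpose hc hκ).re_neg_of_mem_spectrum_diagonal_mul hd (hA' ▸ hμ)
  have hunit : IsUnit (1 - A) := by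
    have h1 : IsUnit (1 - A.map ofReal) := by
      simpa [spectrum.mem_iff] using mt (hspec 1) (by norm_num)
    exact isUnit_of_isUnit_map ofRealHom
      (show IsUnit ((1 - A).map ofReal) by simpa [Matrix.map_sub] using h1)
  set T := (1 - A)⁻¹ * (1 + A)
  have hT : (1 - A.map ofReal) * T.map ofReal = 1 + A.map ofReal := by
    have hTreal : (1 - A) * T = 1 + A :=
      mul_nonsing_inv_cancel_left _ _ ((isUnit_iff_isUnit_det _).mp hunit)
    have := congrArg ofRealHom.mapMatrix hTreal
    rwa [map_mul, map_sub, map_add, map_one] at this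
  have hnorm : ∀ μ ∈ spectrum ℂ (T.map ofReal), ‖μ‖ < 1 := fun μ hμ =>
    norm_lt_one_of_re_sub_one_div_add_one_neg
      (hspec _ (sub_one_div_add_one_mem_spectrum_of_sub_mul_eq_add hT hμ))
  refine ⟨hunit, hnorm, ?_⟩
  simpa using spectralRadius_lt_of_finite (finite_spectrum _) one_pos
    fun k hk => by exact_mod_cast hnorm k hk
end
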